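/- If c is a codeword of C[ℓ] (the image of the gap encoder φ with anchor-decodable characteristic sequence f_ℓ on {0,1}^{k_ℓ}), then every cyclic shift of c by n₀ ∈ ℤ_{2^ℓ} is also a codeword of C[ℓ], and the 2^ℓ cyclic shifts of c are pairwise distinct. Consequently k_ℓ ≤ ℓ + ⌊log₂ p(2^ℓ, ℓ)⌋ where p(n,w) is the number of primitive binary necklaces of length n and weight w. -/

import Mathlib

/-!
The ones of `gapEncode ℓ d`, read downwards from the anchor `d ℓ` on the cycle `ZMod (2 ^ ℓ)`,
are separated by the wrap-around gap `2 ^ ℓ - ∑ (1 + d i)` and then by `1 + d 1, …, 1 + d (ℓ - 1)`.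
As `∑_{1 ≤ i < ℓ} 2 ^ f_ℓ(i) + 2 ^ (ℓ - log ℓ) ≤ 2 ^ ℓ`, the wrap-around gap is at least as long
as any other gap. Two gap descriptions of one set of ones differ by a rotation. If the rotation
is nontrivial, the wrap-around gap of the first description is an ordinary gap of the second,
which forces every gap of the first to be maximal; its gap at the place of the second's
wrap-around gap is then long while the next one, the second's first gap, is short, although
`f_ℓ` first takes the value `ℓ - log ℓ - 1` and then `ℓ - log ℓ`. So a codeword determines its
anchor and its gaps: cyclic shifts only move the anchor, the `2 ^ ℓ` shifts are distinct, every
codeword is a primitive necklace of weight `ℓ`, and counting gives `2 ^ ∑ f_ℓ(i) ≤ 2 ^ ℓ * p`.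
-/

/-- The characteristic sequence f_ℓ. -/
def fl (ℓ i : ℕ) : ℕ :=
  if i = ℓ then ℓ
  else if 2 ^ Nat.log 2 ℓ = ℓ then
    (if i = 1 then ℓ - Nat.log 2 ℓ - 1 else ℓ - Nat.log 2 ℓ)
  else if i ≤ ℓ - (2 ^ Nat.clog 2 ℓ - ℓ) then ℓ - Nat.clog 2 ℓ
  else ℓ - Nat.log 2 ℓ

open Classical in
noncomputable def gapEncode (ℓ : ℕ) (d : ℕ → ℕ) : ZMod (2 ^ ℓ) → Bool :=
  fun z => decide (∃ j ∈ Finset.Icc 1 ℓ,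
    z = ((d ℓ + ∑ i ∈ Finset.Icc j (ℓ - 1), (1 + d i) : ℕ) : ZMod (2 ^ ℓ)))

/-- Cyclic shift of a length-`n` binary vector by `n₀`. -/
def shiftc (n : ℕ) (c : ZMod n → Bool) (n₀ : ZMod n) : ZMod n → Bool :=
  fun z => c (z - n₀)


open Finset Function

theorem Nat.clog_eq_log_add_one {b n : ℕ} (hb : 1 < b) (hn : n ≠ 0) (h : b ^ Nat.log b n ≠ n) :
    Nat.clog b n = Nat.log b n + 1 :=
  le_antisymm (Nat.clog_le_of_le_pow (Nat.lt_pow_succ_log_self hb n).le)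
    ((Nat.lt_clog_iff_pow_lt hb).2 ((Nat.pow_log_le_self b hn).lt_of_ne h))

theorem Nat.le_add_log_of_pow_le_mul {b m n p : ℕ} (hb : 1 < b) (h : b ^ m ≤ p * b ^ n) :
    m ≤ n + Nat.log b p := by
  rcases le_or_gt m n with hmn | hnm
  · omega
  · have hsplit : b ^ m = b ^ (m - n) * b ^ n := by rw [← pow_add, Nat.sub_add_cancel hnm.le]
    rw [hsplit] at h
    have := Nat.le_log_of_pow_le hb (Nat.le_of_mul_le_mul_right h (by positivity))
    omega

theorem ZMod.val_add_one_of_ne_zero {n : ℕ} (hn : 1 < n) {s : ZMod n} (hs : s + 1 ≠ 0) :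
    (s + 1).val = s.val + 1 := by
  have : NeZero n := ⟨by omega⟩
  have hone : (1 : ZMod n).val = 1 := by rw [ZMod.val_one_eq_one_mod, Nat.mod_eq_of_lt hn]
  rw [ZMod.val_add, hone]
  refine Nat.mod_eq_of_lt (lt_of_le_of_ne (show s.val + 1 ≤ n from s.val_lt) fun h => hs ?_)
  rw [← ZMod.val_eq_zero, ZMod.val_add, hone, h, Nat.mod_self]

section CharacteristicSequence

theorem fl_self (ℓ : ℕ) : fl ℓ ℓ = ℓ := by simp [fl]

def flThreshold (ℓ : ℕ) : ℕ := max 1 (2 * ℓ - 2 ^ (Nat.log 2 ℓ + 1))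

theorem fl_of_lt {ℓ i : ℕ} (hi : 1 ≤ i) (hiℓ : i < ℓ) :
    fl ℓ i = if i ≤ flThreshold ℓ then ℓ - Nat.log 2 ℓ - 1 else ℓ - Nat.log 2 ℓ := by
  have hlow : 2 ^ Nat.log 2 ℓ ≤ ℓ := Nat.pow_log_le_self 2 (by omega)
  have hhigh : ℓ < 2 ^ (Nat.log 2 ℓ + 1) := Nat.lt_pow_succ_log_self one_lt_two ℓ
  have hdouble : 2 ^ (Nat.log 2 ℓ + 1) = 2 * 2 ^ Nat.log 2 ℓ := pow_succ' 2 _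
  unfold fl flThreshold
  rw [if_neg hiℓ.ne]
  by_cases hpow : 2 ^ Nat.log 2 ℓ = ℓ
  · simp only [hpow, if_true]
    split_ifs <;> omega
  · simp only [hpow, if_false, Nat.clog_eq_log_add_one one_lt_two (by omega) hpow]
    split_ifs <;> omega

theorem one_le_flThreshold (ℓ : ℕ) : 1 ≤ flThreshold ℓ := le_max_left _ _

theorem flThreshold_lt {ℓ : ℕ} (hℓ : 2 ≤ ℓ) : flThreshold ℓ < ℓ := by
  have := Nat.lt_pow_succ_log_self one_lt_two ℓ
  unfold flThreshold; omega

theorem fl_le {ℓ i : ℕ} (hi : 1 ≤ i) (hiℓ : i < ℓ) : fl ℓ i ≤ ℓ - Nat.log 2 ℓ := by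
  rw [fl_of_lt hi hiℓ]; split_ifs <;> omega

theorem fl_one {ℓ : ℕ} (hℓ : 2 ≤ ℓ) : fl ℓ 1 = ℓ - Nat.log 2 ℓ - 1 := by
  rw [fl_of_lt le_rfl hℓ, if_pos (one_le_flThreshold ℓ)]

theorem fl_le_fl_add_one {ℓ i : ℕ} (hi : 1 ≤ i) (hiℓ : i + 1 < ℓ) : fl ℓ i ≤ fl ℓ (i + 1) := by
  rw [fl_of_lt hi (by omega), fl_of_lt (by omega) hiℓ]; split_ifs <;> omega

theorem sum_two_pow_fl_add_le {ℓ : ℕ} (hℓ : 2 ≤ ℓ) :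
    ∑ i ∈ Ico 1 ℓ, 2 ^ fl ℓ i + 2 ^ (ℓ - Nat.log 2 ℓ) ≤ 2 ^ ℓ := by
  set k := Nat.log 2 ℓ
  set a := flThreshold ℓ
  have hk : k < ℓ := Nat.log_lt_self 2 (by omega)
  have ha : a < ℓ := flThreshold_lt hℓ
  have hak : 2 * ℓ ≤ a + 2 ^ (k + 1) := by
    have : 2 * ℓ - 2 ^ (k + 1) ≤ a := le_max_right _ _
    omega
  have hsmall : ∀ i ∈ Ico 1 (a + 1), 2 ^ fl ℓ i = 2 ^ (ℓ - k - 1) := fun i hi => by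
    rw [mem_Ico] at hi; rw [fl_of_lt hi.1 (by omega), if_pos (by omega)]
  have hlarge : ∀ i ∈ Ico (a + 1) ℓ, 2 ^ fl ℓ i = 2 * 2 ^ (ℓ - k - 1) := fun i hi => by
    rw [mem_Ico] at hi
    rw [fl_of_lt (by omega) hi.2, if_neg (by omega), ← pow_succ']
    congr 1; omega
  have htop : 2 ^ ℓ = 2 ^ (k + 1) * 2 ^ (ℓ - k - 1) := by rw [← pow_add]; congr 1; omega
  rw [← sum_Ico_consecutive _ (by omega : 1 ≤ a + 1) ha, sum_congr rfl hsmall,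
    sum_congr rfl hlarge, sum_const, sum_const, Nat.card_Ico, Nat.card_Ico, smul_eq_mul,
    smul_eq_mul, show ℓ - k = ℓ - k - 1 + 1 by omega, pow_succ', htop]
  calc a * 2 ^ (ℓ - k - 1) + (ℓ - (a + 1)) * (2 * 2 ^ (ℓ - k - 1)) + 2 * 2 ^ (ℓ - k - 1)
      = (a + 2 * (ℓ - (a + 1)) + 2) * 2 ^ (ℓ - k - 1) := by ring
    _ ≤ 2 ^ (k + 1) * 2 ^ (ℓ - k - 1) := Nat.mul_le_mul_right _ (by omega)

end CharacteristicSequence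

section CyclicMarks

variable {N ℓ : ℕ}

def IsGapBelow (c : ZMod N → Bool) (z : ZMod N) (r : ℕ) : Prop :=
  0 < r ∧ c (z - r) = true ∧ ∀ s : ℕ, 0 < s → s < r → c (z - s) = false

theorem IsGapBelow.unique {c : ZMod N → Bool} {z : ZMod N} {r r' : ℕ}
    (h : IsGapBelow c z r) (h' : IsGapBelow c z r') : r = r' := by
  by_contra hne
  rcases Nat.lt_or_gt_of_ne hne with hlt | hlt
  · simpa [h.2.1] using h'.2.2 r h.1 hlt
  · simpa [h'.2.1] using h.2.2 r' h'.1 hlt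

structure IsCyclicComposition (N : ℕ) (G : ZMod ℓ → ℕ) : Prop where
  pos : ∀ t, 0 < G t
  sum_range : ∑ i ∈ range ℓ, G i = N

def cyclicMark (a : ZMod N) (G : ZMod ℓ → ℕ) (t : ZMod ℓ) : ZMod N :=
  a - ((∑ i ∈ range t.val, G i : ℕ) : ZMod N)

theorem cyclicMark_zero (a : ZMod N) (G : ZMod ℓ → ℕ) : cyclicMark a G 0 = a := by
  simp [cyclicMark]

namespace IsCyclicComposition

variable {G : ZMod ℓ → ℕ}

theorem strictMono_sum_range (hG : IsCyclicComposition N G) :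
    StrictMono fun m => ∑ i ∈ range m, G i :=
  strictMono_nat_of_lt_succ fun m => by
    rw [sum_range_succ]
    exact Nat.lt_add_of_pos_right (hG.pos m)

theorem sum_range_val_lt [NeZero ℓ] (hG : IsCyclicComposition N G) (t : ZMod ℓ) :
    ∑ i ∈ range t.val, G i < N :=
  hG.sum_range ▸ hG.strictMono_sum_range t.val_lt

theorem cyclicMark_natCast (hG : IsCyclicComposition N G) (a : ZMod N) {m : ℕ}
    (hm : m ≤ ℓ) : cyclicMark a G m = a - ((∑ i ∈ range m, G i : ℕ) : ZMod N) := by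
  rcases hm.lt_or_eq with hm | rfl
  · rw [cyclicMark, ZMod.val_cast_of_lt hm]
  · simp [cyclicMark, hG.sum_range]

theorem cyclicMark_add_one [NeZero ℓ] (hG : IsCyclicComposition N G) (a : ZMod N)
    (t : ZMod ℓ) : cyclicMark a G (t + 1) = cyclicMark a G t - G t := by
  have ht : t + 1 = ((t.val + 1 : ℕ) : ZMod ℓ) := by push_cast; rw [ZMod.natCast_zmod_val]
  rw [ht, hG.cyclicMark_natCast a t.val_lt, sum_range_succ, ZMod.natCast_zmod_val, cyclicMark]
  push_cast
  ring

theorem cyclicMark_injective [NeZero ℓ] (hG : IsCyclicComposition N G) (a : ZMod N) :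
    Injective (cyclicMark a G) := by
  intro t t' h
  rw [cyclicMark, cyclicMark, sub_right_inj, ZMod.natCast_eq_natCast_iff] at h
  exact ZMod.val_injective _ (hG.strictMono_sum_range.injective
    (h.eq_of_lt_of_lt (hG.sum_range_val_lt t) (hG.sum_range_val_lt t')))

theorem card_filter_eq [NeZero N] [NeZero ℓ] (hG : IsCyclicComposition N G) {c : ZMod N → Bool}
    {a : ZMod N} (hc : ∀ z, c z = true ↔ ∃ t, z = cyclicMark a G t) :
    #{z | c z = true} = ℓ := by
  have himage : ({z | c z = true} : Finset (ZMod N)) = univ.image (cyclicMark a G) := by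
    ext z
    simp [hc, eq_comm]
  rw [himage, card_image_of_injective _ (hG.cyclicMark_injective a), card_univ, ZMod.card]

theorem isGapBelow_cyclicMark [NeZero ℓ] (hG : IsCyclicComposition N G) {c : ZMod N → Bool}
    {a : ZMod N} (hc : ∀ z, c z = true ↔ ∃ t, z = cyclicMark a G t) (t : ZMod ℓ) :
    IsGapBelow c (cyclicMark a G t) (G t) := by
  refine ⟨hG.pos t, (hc _).2 ⟨t + 1, (hG.cyclicMark_add_one a t).symm⟩, fun s hs hst => ?_⟩
  rw [Bool.eq_false_iff, ne_eq, hc]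
  rintro ⟨t', ht'⟩
  have hS := hG.strictMono_sum_range
  have hcast : ((∑ i ∈ range t.val, G i + s : ℕ) : ZMod N)
      = ((∑ i ∈ range t'.val, G i : ℕ) : ZMod N) := by
    rw [cyclicMark, cyclicMark] at ht'
    rw [Nat.cast_add]
    linear_combination -ht'
  have hnext : ∑ i ∈ range t.val, G i + s < ∑ i ∈ range (t.val + 1), G i := by
    rw [sum_range_succ, ZMod.natCast_zmod_val]; omega
  have hlt : ∑ i ∈ range t.val, G i + s < N :=
    hnext.trans_le (hG.sum_range ▸ hS.monotone t.val_lt)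
  have heq := ((ZMod.natCast_eq_natCast_iff _ _ _).1 hcast).eq_of_lt_of_lt hlt
    (hG.sum_range_val_lt t')
  have h1 : t.val < t'.val := hS.lt_iff_lt.1 (by omega)
  have h2 : t'.val < t.val + 1 := hS.lt_iff_lt.1 (by omega)
  omega

theorem exists_rotate_of_marks [NeZero ℓ] {G' : ZMod ℓ → ℕ} (hG : IsCyclicComposition N G)
    (hG' : IsCyclicComposition N G') {c : ZMod N → Bool} {a a' : ZMod N}
    (hc : ∀ z, c z = true ↔ ∃ t, z = cyclicMark a G t)
    (hc' : ∀ z, c z = true ↔ ∃ t, z = cyclicMark a' G' t) :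
    ∃ s, a' = cyclicMark a G s ∧ ∀ t, G' t = G (t + s) := by
  obtain ⟨s, hs⟩ := (hc a').1 ((hc' a').2 ⟨0, (cyclicMark_zero a' G').symm⟩)
  have hgap : ∀ t u, cyclicMark a' G' t = cyclicMark a G u → G' t = G u := fun t u h =>
    (hG'.isGapBelow_cyclicMark hc' t).unique (h ▸ hG.isGapBelow_cyclicMark hc u)
  have hmark : ∀ m : ℕ, cyclicMark a' G' m = cyclicMark a G (m + s) := by
    intro m
    induction m with
    | zero => rwa [Nat.cast_zero, cyclicMark_zero, zero_add]
    | succ m ih =>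
      rw [Nat.cast_succ, hG'.cyclicMark_add_one, ih, hgap _ _ ih, add_right_comm,
        hG.cyclicMark_add_one]
  refine ⟨s, hs, fun t => ?_⟩
  rw [← ZMod.natCast_zmod_val t]
  exact hgap _ _ (hmark _)

end IsCyclicComposition

theorem shiftc_iff_cyclicMark {G : ZMod ℓ → ℕ} {c : ZMod N → Bool} {a : ZMod N}
    (hc : ∀ z, c z = true ↔ ∃ t, z = cyclicMark a G t) (n₀ z : ZMod N) :
    shiftc N c n₀ z = true ↔ ∃ t, z = cyclicMark (a + n₀) G t := by
  rw [shiftc, hc]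
  refine exists_congr fun t => ?_
  rw [cyclicMark, cyclicMark, sub_eq_iff_eq_add]
  constructor <;> intro h <;> linear_combination h

theorem shiftc_zero (c : ZMod N → Bool) : shiftc N c 0 = c :=
  funext fun z => by rw [shiftc, sub_zero]

end CyclicMarks

section GapEncode

variable {ℓ : ℕ} {d d' : ℕ → ℕ}

def IsAdmissible (ℓ : ℕ) (d : ℕ → ℕ) : Prop := ∀ i ∈ Icc 1 ℓ, d i < 2 ^ fl ℓ i

theorem IsAdmissible.update (hd : IsAdmissible ℓ d) {v : ℕ} (hv : v < 2 ^ ℓ) :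
    IsAdmissible ℓ (update d ℓ v) := by
  intro i hi
  rcases eq_or_ne i ℓ with rfl | hiℓ
  · rwa [update_self, fl_self]
  · rw [update_of_ne hiℓ]
    exact hd i hi

theorem IsAdmissible.sum_add_le (hℓ : 2 ≤ ℓ) (hd : IsAdmissible ℓ d) :
    ∑ i ∈ Ico 1 ℓ, (1 + d i) + 2 ^ (ℓ - Nat.log 2 ℓ) ≤ 2 ^ ℓ := by
  refine le_trans (Nat.add_le_add_right (sum_le_sum fun i hi => ?_) _) (sum_two_pow_fl_add_le hℓ)
  have := hd i (Ico_subset_Icc_self hi)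
  omega

def gapSeq (ℓ : ℕ) (d : ℕ → ℕ) (t : ZMod ℓ) : ℕ :=
  if t = 0 then 2 ^ ℓ - ∑ i ∈ Ico 1 ℓ, (1 + d i) else 1 + d t.val

theorem gapSeq_natCast {i : ℕ} (hi : 1 ≤ i) (hiℓ : i < ℓ) :
    gapSeq ℓ d i = 1 + d i := by
  rw [gapSeq, if_neg, ZMod.val_cast_of_lt hiℓ]
  rw [← ne_eq, ← ZMod.val_ne_zero, ZMod.val_cast_of_lt hiℓ]
  omega

theorem gapSeq_update [NeZero ℓ] (v : ℕ) : gapSeq ℓ (update d ℓ v) = gapSeq ℓ d := by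
  funext t
  have hsum : ∑ i ∈ Ico 1 ℓ, (1 + update d ℓ v i) = ∑ i ∈ Ico 1 ℓ, (1 + d i) :=
    sum_congr rfl fun i hi => by rw [update_of_ne (mem_Ico.1 hi).2.ne]
  simp only [gapSeq, hsum, update_of_ne t.val_lt.ne]

theorem sum_range_gapSeq_add [NeZero ℓ] (hT : ∑ i ∈ Ico 1 ℓ, (1 + d i) ≤ 2 ^ ℓ) {j : ℕ}
    (hj : 1 ≤ j) (hjℓ : j ≤ ℓ) :
    ∑ i ∈ range j, gapSeq ℓ d i + ∑ i ∈ Ico j ℓ, (1 + d i) = 2 ^ ℓ := by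
  have hsum : ∑ i ∈ range j, gapSeq ℓ d i = gapSeq ℓ d 0 + ∑ i ∈ Ico 1 j, (1 + d i) := by
    rw [range_eq_Ico, sum_eq_sum_Ico_succ_bot (by omega), Nat.cast_zero]
    exact congrArg _ (sum_congr rfl fun i hi => gapSeq_natCast (mem_Ico.1 hi).1 (by grind))
  rw [hsum, add_assoc, sum_Ico_consecutive _ hj hjℓ, gapSeq, if_pos rfl]
  omega

theorem gapSeq_zero_ge (hℓ : 2 ≤ ℓ) (hd : IsAdmissible ℓ d) :
    2 ^ (ℓ - Nat.log 2 ℓ) ≤ gapSeq ℓ d 0 := by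
  have := hd.sum_add_le hℓ
  rw [gapSeq, if_pos rfl]
  omega

theorem gapSeq_le [NeZero ℓ] (hd : IsAdmissible ℓ d) {t : ZMod ℓ} (ht : t ≠ 0) :
    gapSeq ℓ d t ≤ 2 ^ fl ℓ t.val := by
  rw [gapSeq, if_neg ht]
  have := hd t.val (mem_Icc.2 ⟨ZMod.val_pos.2 ht, t.val_lt.le⟩)
  omega

theorem gapSeq_eq_of_gapSeq_zero_le [NeZero ℓ] (hℓ : 2 ≤ ℓ) (hd : IsAdmissible ℓ d)
    (h : gapSeq ℓ d 0 ≤ 2 ^ (ℓ - Nat.log 2 ℓ)) {t : ZMod ℓ} (ht : t ≠ 0) :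
    gapSeq ℓ d t = 2 ^ fl ℓ t.val := by
  have hle : ∀ i ∈ Ico 1 ℓ, 1 + d i ≤ 2 ^ fl ℓ i := fun i hi => by
    have := hd i (Ico_subset_Icc_self hi)
    omega
  have hsum : ∑ i ∈ Ico 1 ℓ, (1 + d i) = ∑ i ∈ Ico 1 ℓ, 2 ^ fl ℓ i := by
    have := sum_two_pow_fl_add_le hℓ
    have := sum_le_sum hle
    rw [gapSeq, if_pos rfl] at h
    omega
  rw [gapSeq, if_neg ht]
  exact (sum_eq_sum_iff_of_le hle).1 hsum t.val (mem_Ico.2 ⟨ZMod.val_pos.2 ht, t.val_lt⟩)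

theorem isCyclicComposition_gapSeq [NeZero ℓ] (hℓ : 2 ≤ ℓ) (hd : IsAdmissible ℓ d) :
    IsCyclicComposition (2 ^ ℓ) (gapSeq ℓ d) where
  pos t := by
    by_cases ht : t = 0
    · exact ht ▸ (Nat.two_pow_pos _).trans_le (gapSeq_zero_ge hℓ hd)
    · rw [gapSeq, if_neg ht]; omega
  sum_range := by
    simpa using sum_range_gapSeq_add ((Nat.le_add_right _ _).trans (hd.sum_add_le hℓ))
      (by omega) le_rfl

theorem gapEncode_iff [NeZero ℓ] (hℓ : 2 ≤ ℓ) (hd : IsAdmissible ℓ d) (z : ZMod (2 ^ ℓ)) :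
    gapEncode ℓ d z = true ↔ ∃ t, z = cyclicMark (d ℓ : ZMod (2 ^ ℓ)) (gapSeq ℓ d) t := by
  have hT := (Nat.le_add_right _ _).trans (hd.sum_add_le hℓ)
  have hmark : ∀ j ∈ Icc 1 ℓ, cyclicMark (d ℓ : ZMod (2 ^ ℓ)) (gapSeq ℓ d) j
      = ((d ℓ + ∑ i ∈ Icc j (ℓ - 1), (1 + d i) : ℕ) : ZMod (2 ^ ℓ)) := by
    intro j hj
    obtain ⟨hj1, hjℓ⟩ := mem_Icc.1 hj
    have hsum : ((∑ i ∈ range j, gapSeq ℓ d i : ℕ) : ZMod (2 ^ ℓ))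
        + ((∑ i ∈ Ico j ℓ, (1 + d i) : ℕ) : ZMod (2 ^ ℓ)) = 0 := by
      rw [← Nat.cast_add, sum_range_gapSeq_add hT hj1 hjℓ, ZMod.natCast_self]
    rw [(isCyclicComposition_gapSeq hℓ hd).cyclicMark_natCast _ hjℓ,
      show Icc j (ℓ - 1) = Ico j ℓ by ext; simp; omega, Nat.cast_add]
    linear_combination -hsum
  have hsurj : ∀ t : ZMod ℓ, ∃ j ∈ Icc 1 ℓ, (j : ZMod ℓ) = t := fun t => by
    by_cases ht : t = 0
    · exact ⟨ℓ, mem_Icc.2 ⟨by omega, le_rfl⟩, ht ▸ ZMod.natCast_self ℓ⟩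
    · exact ⟨t.val, mem_Icc.2 ⟨ZMod.val_pos.2 ht, t.val_lt.le⟩, ZMod.natCast_zmod_val t⟩
  simp only [gapEncode, decide_eq_true_eq]
  constructor
  · rintro ⟨j, hj, rfl⟩
    exact ⟨j, (hmark j hj).symm⟩
  · rintro ⟨t, rfl⟩
    obtain ⟨j, hj, rfl⟩ := hsurj t
    exact ⟨j, hj, hmark j hj⟩

theorem eq_zero_of_gapSeq_eq_rotate [NeZero ℓ] (hℓ : 2 ≤ ℓ) (hd : IsAdmissible ℓ d)
    (hd' : IsAdmissible ℓ d') {s : ZMod ℓ} (hs : ∀ t, gapSeq ℓ d' t = gapSeq ℓ d (t + s)) :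
    s = 0 := by
  by_contra hs0
  have hk : Nat.log 2 ℓ < ℓ := Nat.log_lt_self 2 (by omega)
  have hhalf : 2 ^ (ℓ - Nat.log 2 ℓ) = 2 * 2 ^ (ℓ - Nat.log 2 ℓ - 1) := by
    rw [← pow_succ']; congr 1; omega
  have hmax : ∀ t ≠ 0, gapSeq ℓ d t = 2 ^ fl ℓ t.val := by
    refine fun t => gapSeq_eq_of_gapSeq_zero_le hℓ hd ?_
    calc gapSeq ℓ d 0 = gapSeq ℓ d' (-s) := by rw [hs, neg_add_cancel]
      _ ≤ 2 ^ fl ℓ (-s).val := gapSeq_le hd' (neg_ne_zero.2 hs0)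
      _ ≤ 2 ^ (ℓ - Nat.log 2 ℓ) :=
        Nat.pow_le_pow_right two_pos (fl_le (ZMod.val_pos.2 (neg_ne_zero.2 hs0)) (ZMod.val_lt _))
  -- `d` has the long wrap-around gap of `d'` at `s` and the short first gap of `d'` at `s + 1`.
  have hlarge : 2 ^ (ℓ - Nat.log 2 ℓ) ≤ 2 ^ fl ℓ s.val := by
    rw [← hmax s hs0, ← zero_add s, ← hs]
    exact gapSeq_zero_ge hℓ hd'
  have hsmall : gapSeq ℓ d (s + 1) ≤ 2 ^ (ℓ - Nat.log 2 ℓ - 1) := by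
    have hone : (1 : ZMod ℓ).val = 1 := by rw [ZMod.val_one_eq_one_mod, Nat.mod_eq_of_lt hℓ]
    rw [add_comm, ← hs, ← fl_one hℓ, ← hone]
    exact gapSeq_le hd' (by rw [← ZMod.val_ne_zero, hone]; omega)
  have hs1 : s + 1 ≠ 0 := fun h => by
    have := gapSeq_zero_ge hℓ hd
    have := Nat.two_pow_pos (ℓ - Nat.log 2 ℓ - 1)
    rw [h] at hsmall
    omega
  have hval := ZMod.val_add_one_of_ne_zero hℓ hs1
  rw [hmax _ hs1, hval] at hsmall
  have hmono := fl_le_fl_add_one (ZMod.val_pos.2 hs0) (hval ▸ (s + 1).val_lt)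
  have h1 := (Nat.pow_le_pow_iff_right one_lt_two).1 hlarge
  have h2 := (Nat.pow_le_pow_iff_right one_lt_two).1 hsmall
  omega

theorem eqOn_of_gapEncode_eq [NeZero ℓ] (hℓ : 2 ≤ ℓ) (hd : IsAdmissible ℓ d)
    (hd' : IsAdmissible ℓ d') (h : gapEncode ℓ d = gapEncode ℓ d') : Set.EqOn d d' (Icc 1 ℓ) := by
  obtain ⟨s, hanchor, hrot⟩ := (isCyclicComposition_gapSeq hℓ hd).exists_rotate_of_marks
    (isCyclicComposition_gapSeq hℓ hd') (gapEncode_iff hℓ hd) (h ▸ gapEncode_iff hℓ hd')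
  obtain rfl := eq_zero_of_gapSeq_eq_rotate hℓ hd hd' hrot
  intro i hi
  obtain ⟨hi1, hiℓ⟩ := mem_Icc.1 hi
  rcases hiℓ.lt_or_eq with hiℓ | rfl
  · have := hrot i
    rw [add_zero, gapSeq_natCast hi1 hiℓ, gapSeq_natCast hi1 hiℓ] at this
    omega
  · have hlt := hd i hi
    have hlt' := hd' i hi
    rw [fl_self] at hlt hlt'
    rw [cyclicMark_zero, ZMod.natCast_eq_natCast_iff] at hanchor
    exact (hanchor.eq_of_lt_of_lt hlt' hlt).symm

theorem shiftc_gapEncode [NeZero ℓ] (hℓ : 2 ≤ ℓ) (hd : IsAdmissible ℓ d) (n₀ : ZMod (2 ^ ℓ)) :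
    shiftc (2 ^ ℓ) (gapEncode ℓ d) n₀
      = gapEncode ℓ (update d ℓ ((d ℓ + n₀.val) % 2 ^ ℓ)) := by
  have hd₀ := hd.update (Nat.mod_lt (d ℓ + n₀.val) (Nat.two_pow_pos ℓ))
  funext z
  rw [Bool.eq_iff_iff, shiftc_iff_cyclicMark (gapEncode_iff hℓ hd), gapEncode_iff hℓ hd₀,
    gapSeq_update, update_self, ZMod.natCast_mod, Nat.cast_add, ZMod.natCast_zmod_val]

theorem shiftc_gapEncode_injective [NeZero ℓ] (hℓ : 2 ≤ ℓ) (hd : IsAdmissible ℓ d) :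
    Injective (shiftc (2 ^ ℓ) (gapEncode ℓ d)) := by
  intro n₀ n₁ h
  have hG := isCyclicComposition_gapSeq hℓ hd
  obtain ⟨s, hanchor, hrot⟩ := hG.exists_rotate_of_marks hG
    (shiftc_iff_cyclicMark (gapEncode_iff hℓ hd) n₀)
    (h ▸ shiftc_iff_cyclicMark (gapEncode_iff hℓ hd) n₁)
  obtain rfl := eq_zero_of_gapSeq_eq_rotate hℓ hd hd hrot
  rw [cyclicMark_zero] at hanchor
  exact (add_left_cancel hanchor).symm

theorem two_pow_sum_fl_le_card [NeZero ℓ] (hℓ : 2 ≤ ℓ) {S : Finset (ZMod (2 ^ ℓ) → Bool)}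
    (hS : ∀ d, IsAdmissible ℓ d → gapEncode ℓ d ∈ S) : 2 ^ ∑ i ∈ Icc 1 ℓ, fl ℓ i ≤ #S := by
  let extend (f : ∀ i ∈ Icc 1 ℓ, ℕ) (i : ℕ) : ℕ := if h : i ∈ Icc 1 ℓ then f i h else 0
  have hadm : ∀ f ∈ (Icc 1 ℓ).pi fun i => range (2 ^ fl ℓ i), IsAdmissible ℓ (extend f) :=
    fun f hf i hi => by simpa only [extend, dif_pos hi, mem_range] using mem_pi.1 hf i hi
  calc 2 ^ ∑ i ∈ Icc 1 ℓ, fl ℓ i = #((Icc 1 ℓ).pi fun i => range (2 ^ fl ℓ i)) := by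
        simp only [card_pi, card_range, prod_pow_eq_pow_sum]
    _ ≤ #S := card_le_card_of_injOn (fun f => gapEncode ℓ (extend f))
        (fun f hf => hS _ (hadm f hf)) fun f hf f' hf' h => by
          have := eqOn_of_gapEncode_eq hℓ (hadm f hf) (hadm f' hf') h
          funext i hi
          simpa only [extend, dif_pos hi] using this hi

end GapEncode

open Classical in
theorem stmt18 (ℓ : ℕ) (hℓ : 3 ≤ ℓ)
    (C : Set (ZMod (2 ^ ℓ) → Bool))
    (hC : C = {c | ∃ d : ℕ → ℕ,
      (∀ i ∈ Finset.Icc 1 ℓ, d i < 2 ^ fl ℓ i) ∧ c = gapEncode ℓ d})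
    (p : ℕ)
    (hp : p * 2 ^ ℓ = (Finset.univ.filter fun c : ZMod (2 ^ ℓ) → Bool =>
        (Finset.univ.filter fun z => c z = true).card = ℓ ∧
        ∀ n₀ : ZMod (2 ^ ℓ), n₀ ≠ 0 → shiftc (2 ^ ℓ) c n₀ ≠ c).card) :
    (∀ c ∈ C, ∀ n₀ : ZMod (2 ^ ℓ), shiftc (2 ^ ℓ) c n₀ ∈ C) ∧
    (∀ c ∈ C, ∀ n₀ n₁ : ZMod (2 ^ ℓ),
      shiftc (2 ^ ℓ) c n₀ = shiftc (2 ^ ℓ) c n₁ → n₀ = n₁) ∧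
    ∑ i ∈ Finset.Icc 1 ℓ, fl ℓ i ≤ ℓ + Nat.log 2 p := by
  have : NeZero ℓ := ⟨by omega⟩
  have hℓ2 : 2 ≤ ℓ := by omega
  subst hC
  refine ⟨?_, ?_, ?_⟩
  · rintro c ⟨d, hd, rfl⟩ n₀
    exact ⟨_, IsAdmissible.update hd (Nat.mod_lt _ (Nat.two_pow_pos ℓ)),
      shiftc_gapEncode hℓ2 hd n₀⟩
  · rintro c ⟨d, hd, rfl⟩
    exact shiftc_gapEncode_injective hℓ2 hd
  · refine Nat.le_add_log_of_pow_le_mul one_lt_two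
      (hp ▸ two_pow_sum_fl_le_card hℓ2 fun d hd => mem_filter.2 ⟨mem_univ _, ?_, ?_⟩)
    · exact (isCyclicComposition_gapSeq hℓ2 hd).card_filter_eq (gapEncode_iff hℓ2 hd)
    · exact fun n₀ hn₀ h =>
        hn₀ (shiftc_gapEncode_injective hℓ2 hd (h.trans (shiftc_zero _).symm))
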